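/- arXiv:1506.03883 — 2 statements merged into one kernel-verified Lean document; each statement's English description precedes it below -/
import Mathlib

section
/- A finite game graph G yields static hierarchical information with respect to a total order ⪯ on the players if, and only if, for every pair of players with i ⪯ j there exists a Moore machine with input alphabet B^i and output alphabet B^j which, on input β^i(π), outputs β^j(π), for every history π of G. -/
/-- A finite game graph for `n` players: positions `V` with initial position `init`,
action sets `A i`, observation sets `B i`, a move relation labelled by action
profiles (with no dead ends), and observation functions. -/
structure GameGraph (n : ℕ) (V : Type) (A : Fin n → Type) (B : Fin n → Type) where
  init : V
  move : V → (∀ i, A i) → V → Prop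
  noDeadEnd : ∀ v a, ∃ w, move v a w
  obs : ∀ i : Fin n, V → B i

/-- A Moore machine with finite state set `Q`, input alphabet `σ`, output alphabet `γ`. -/
structure Moore (σ γ : Type) where
  Q : Type
  finQ : Fintype Q
  q0 : Q
  δ : Q → σ → Q
  out : Q → γ

namespace Moore

/-- The output letter of a Moore machine after reading a word. -/
def output {σ γ : Type} (mc : Moore σ γ) (w : List σ) : γ :=
  mc.out (w.foldl mc.δ mc.q0)

/-- The output word of a Moore machine along a word: the `k`-th letter is the
output after reading the prefix of length `k+1`. -/
def outWord {σ γ : Type} (mc : Moore σ γ) (w : List σ) : List γ :=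
  ((w.scanl mc.δ mc.q0).drop 1).map mc.out

end Moore

/-- A deterministic parity automaton over alphabet `α`. -/
structure ParityAut (α : Type) where
  Q : Type
  finQ : Fintype Q
  q0 : Q
  δ : Q → α → Q
  prio : Q → ℕ

namespace ParityAut

/-- The run of a deterministic parity automaton on an infinite word. -/
def run {α : Type} (d : ParityAut α) (f : ℕ → α) : ℕ → d.Q
  | 0 => d.q0
  | t + 1 => d.δ (run d f t) (f t)

/-- Parity acceptance: the least priority occurring infinitely often is even. -/
def Accepts {α : Type} (d : ParityAut α) (f : ℕ → α) : Prop :=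
  Even (sInf { p | ∃ᶠ t in Filter.atTop, d.prio (d.run f t) = p })

end ParityAut

/-- A deterministic Büchi automaton over alphabet `α` with state set `σ`. -/
structure DetBuchi (α σ : Type) where
  q0 : σ
  δ : σ → α → σ
  accept : Set σ

namespace DetBuchi

/-- The run of a deterministic Büchi automaton on an infinite word. -/
def run {α σ : Type} (d : DetBuchi α σ) (f : ℕ → α) : ℕ → σ
  | 0 => d.q0
  | t + 1 => d.δ (run d f t) (f t)

/-- Büchi acceptance: the run visits accepting states infinitely often. -/
def Accepts {α σ : Type} (d : DetBuchi α σ) (f : ℕ → α) : Prop :=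
  ∃ᶠ t in Filter.atTop, d.run f t ∈ d.accept

end DetBuchi

namespace GameGraph

variable {n : ℕ} {V : Type} {A B : Fin n → Type}

/-- Two positions are linked by a move (for some action profile). -/
def step (G : GameGraph n V A B) (u w : V) : Prop := ∃ a, G.move u a w

/-- A history: a nonempty sequence starting at the initial position, each
consecutive pair lying on a move. -/
def IsHistory (G : GameGraph n V A B) (π : List V) : Prop :=
  π.head? = some G.init ∧ π.Chain' G.step

/-- The observation sequence of player `i` along a history (the observation at
the initial position is discarded). -/
def obsSeq (G : GameGraph n V A B) (i : Fin n) (π : List V) : List (B i) :=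
  (π.drop 1).map (G.obs i)

/-- Histories are indistinguishable for player `i` if they yield the same observations. -/
def Indist (G : GameGraph n V A B) (i : Fin n) (π π' : List V) : Prop :=
  G.obsSeq i π = G.obsSeq i π'

/-- The information set of player `i` at history `π`. -/
def InfoSet (G : GameGraph n V A B) (i : Fin n) (π : List V) : Set (List V) :=
  { π' | G.IsHistory π' ∧ G.Indist i π π' }

/-- A history yields hierarchical information if the information sets of players
are totally ordered by inclusion. -/
def HistHI (G : GameGraph n V A B) (π : List V) : Prop :=
  ∀ i j : Fin n, G.InfoSet i π ⊆ G.InfoSet j π ∨ G.InfoSet j π ⊆ G.InfoSet i π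

/-- Static hierarchical information: there is a total order of the players such
that along every history, the information sets respect this order. -/
def StaticHI (G : GameGraph n V A B) : Prop :=
  ∃ ord : Fin n → Fin n → Prop, IsLinearOrder (Fin n) ord ∧
    ∀ i j : Fin n, ord i j → ∀ π, G.IsHistory π → G.InfoSet i π ⊆ G.InfoSet j π

/-- Hierarchical observation: there is a total order of the players such that
the observation of a smaller player determines that of a bigger player, positionally. -/
def HierObs (G : GameGraph n V A B) : Prop :=
  ∃ ord : Fin n → Fin n → Prop, IsLinearOrder (Fin n) ord ∧
    ∀ i j : Fin n, ord i j → ∀ v v' : V, G.obs i v = G.obs i v' → G.obs j v = G.obs j v'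

/-- Dynamic hierarchical information: every history yields hierarchical information. -/
def DynamicHI (G : GameGraph n V A B) : Prop := ∀ π, G.IsHistory π → G.HistHI π

/-- The prefix `v₀ … v_t` of a play, as a list. -/
def playPrefix (f : ℕ → V) (t : ℕ) : List V := (List.range (t + 1)).map f

/-- A play: an infinite sequence all of whose prefixes are histories. -/
def IsPlay (G : GameGraph n V A B) (f : ℕ → V) : Prop :=
  ∀ t, G.IsHistory (playPrefix f t)

/-- A play yields recurring hierarchical information if infinitely many of its
prefix histories yield hierarchical information. -/
def PlayRecurringHI (G : GameGraph n V A B) (f : ℕ → V) : Prop :=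
  ∀ T, ∃ t, T ≤ t ∧ G.HistHI (playPrefix f t)

/-- A game yields recurring hierarchical information if every play does. -/
def RecurringHI (G : GameGraph n V A B) : Prop :=
  ∀ f, G.IsPlay f → G.PlayRecurringHI f

/-- `[t, t+ℓ]` is a gap of the play `f`: no prefix of length `r ∈ [t, t+ℓ]` yields
hierarchical information.  The length of this gap is `ℓ + 1`. -/
def IsGap (G : GameGraph n V A B) (f : ℕ → V) (t ℓ : ℕ) : Prop :=
  ∀ r, t ≤ r → r ≤ t + ℓ → ¬ G.HistHI (playPrefix f r)

/-- Information-consistency of a strategy profile: each component is constant on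
indistinguishability classes of histories. -/
def Consistent (G : GameGraph n V A B) (s : ∀ i, List V → A i) : Prop :=
  ∀ (i : Fin n) (π π' : List V),
    G.IsHistory π → G.IsHistory π' → G.Indist i π π' → s i π = s i π'

/-- A play follows a strategy profile. -/
def Follows (G : GameGraph n V A B) (s : ∀ i, List V → A i) (f : ℕ → V) : Prop :=
  f 0 = G.init ∧ ∀ t, ∃ a, G.move (f t) a (f (t + 1)) ∧ ∀ i, a i = s i (playPrefix f t)

/-- A distributed winning strategy for winning condition `W`: an information-consistent
profile all of whose outcomes lie in `W`. -/
def WinningProfile (G : GameGraph n V A B) (W : Set (ℕ → V)) (s : ∀ i, List V → A i) : Prop :=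
  G.Consistent s ∧ ∀ f, G.Follows s f → f ∈ W

/-- A finite-state strategy for player `i`: implemented by a Moore machine reading
the observation sequence of the history. -/
def FinStateStrategy (G : GameGraph n V A B) (i : Fin n) (si : List V → A i) : Prop :=
  ∃ mc : Moore (B i) (A i), ∀ π, G.IsHistory π → si π = mc.output (G.obsSeq i π)

/-- The game admits a distributed winning strategy for `W`. -/
def HasDWS (G : GameGraph n V A B) (W : Set (ℕ → V)) : Prop :=
  ∃ s : ∀ i, List V → A i, G.WinningProfile W s

/-- The game admits a finite-state distributed winning strategy for `W`. -/
def HasFinDWS (G : GameGraph n V A B) (W : Set (ℕ → V)) : Prop :=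
  ∃ s : ∀ i, List V → A i, G.WinningProfile W s ∧ ∀ i, G.FinStateStrategy i (s i)

/-- `i ⪯_π j` : at history `π`, player `i` is at least as informed as player `j`. -/
def infoLE (G : GameGraph n V A B) (π : List V) (i j : Fin n) : Prop :=
  G.InfoSet i π ⊆ G.InfoSet j π

/-- The information rank of player `i` at history `π`: the number of players `j`
with `j ≺_π i`, or with `j < i` and `j ≈_π i`. -/
noncomputable def rank (G : GameGraph n V A B) (i : Fin n) (π : List V) : ℕ :=
  Nat.card {j : Fin n //
    (G.infoLE π j i ∧ ¬ G.infoLE π i j) ∨ (j < i ∧ G.infoLE π j i ∧ G.infoLE π i j)}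

/-- The signal `λ_j^i`: the set of observations of player `i` at the last positions of
histories in the information set of player `j`. -/
def lam (G : GameGraph n V A B) (i j : Fin n) (π : List V) : Set (B i) :=
  { b | ∃ π', π' ∈ G.InfoSet j π ∧ ∃ v, π'.getLast? = some v ∧ G.obs i v = b }

/-- Players `i` and `j` cross at stage `ℓ` of the play `f`. -/
def Crossing (G : GameGraph n V A B) (f : ℕ → V) (ℓ : ℕ) (i j : Fin n) : Prop :=
  G.InfoSet i (playPrefix f ℓ) ⊂ G.InfoSet j (playPrefix f ℓ) ∧
  G.InfoSet j (playPrefix f (ℓ + 1)) ⊂ G.InfoSet i (playPrefix f (ℓ + 1))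

/-- A game is cross-free if no two players cross at any stage of any play. -/
def CrossFree (G : GameGraph n V A B) : Prop :=
  ∀ f, G.IsPlay f → ∀ (ℓ : ℕ) (i j : Fin n), ¬ G.Crossing f ℓ i j

end GameGraph

/-!
Player `i` can track its knowledge, the set of current positions of the histories consistent
with its observations so far; this is a subset construction over the finite set `V`. If the
information sets of `i` are contained in those of `j`, then after a nonempty observation all
positions in that knowledge carry the current observation of `j`, so a Moore machine emitting the
`j`-observation of any known position translates `β^i(π)` into `β^j(π)`. Conversely, whenever
`β^j(π)` is a function of `β^i(π)`, histories indistinguishable for `i` are so for `j`.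
-/

theorem Moore.outWord_append_singleton {σ γ : Type} (mc : Moore σ γ) (w : List σ) (a : σ) :
    mc.outWord (w ++ [a]) = mc.outWord w ++ [mc.output (w ++ [a])] := by
  simp [Moore.outWord, Moore.output, List.scanl_append,
    List.drop_append_of_le_length (l₁ := List.scanl mc.δ mc.q0 w) (i := 1) (by simp)]

namespace GameGraph

variable {n : ℕ} {V : Type} {A B : Fin n → Type} (G : GameGraph n V A B)

theorem IsHistory.ne_nil {G : GameGraph n V A B} {π : List V} (h : G.IsHistory π) : π ≠ [] := by
  rintro rfl
  simp [IsHistory] at h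

theorem obsSeq_append_singleton (i : Fin n) {π : List V} (hπ : π ≠ []) (v : V) :
    G.obsSeq i (π ++ [v]) = G.obsSeq i π ++ [G.obs i v] := by
  rw [obsSeq, List.drop_append_of_le_length (List.length_pos_iff.2 hπ)]
  simp [obsSeq]

theorem getLast?_obsSeq {i : Fin n} (j : Fin n) {π : List V} (h : G.obsSeq i π ≠ []) :
    (G.obsSeq j π).getLast? = π.getLast?.map (G.obs j) := by
  have hlen : ¬ π.length ≤ 1 := by
    intro hle
    exact h (List.map_eq_nil_iff.2 (List.drop_eq_nil_of_le hle))
  rw [obsSeq, List.getLast?_map, List.getLast?_drop, if_neg hlen]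

theorem isHistory_append_singleton {π : List V} (hπ : π ≠ []) (v : V) :
    G.IsHistory (π ++ [v]) ↔ G.IsHistory π ∧ ∀ u ∈ π.getLast?, G.step u v := by
  unfold IsHistory
  rw [List.head?_append_of_ne_nil _ hπ, and_assoc]
  have := List.isChain_append (R := G.step) (l₁ := π) (l₂ := [v])
  simp only [List.isChain_singleton, List.head?_cons, Option.mem_some_iff, forall_eq', true_and]
    at this
  exact and_congr_right fun _ => this

theorem eq_singleton_init_of_obsSeq_eq_nil {i : Fin n} {π : List V} (hπ : G.IsHistory π)
    (h : G.obsSeq i π = []) : π = [G.init] := by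
  obtain ⟨hhead, -⟩ := hπ
  match π, h with
  | [v], _ => simpa using hhead
  | _ :: _ :: _, h => simp [obsSeq] at h

def knowledge (i : Fin n) (w : List (B i)) : Set V :=
  {v | ∃ π, G.IsHistory π ∧ G.obsSeq i π = w ∧ π.getLast? = some v}

theorem knowledge_nil (i : Fin n) : G.knowledge i [] = {G.init} := by
  ext v
  constructor
  · rintro ⟨π, hπ, hobs, hlast⟩
    rw [G.eq_singleton_init_of_obsSeq_eq_nil hπ hobs] at hlast
    simpa [eq_comm] using hlast
  · rintro rfl
    exact ⟨[G.init], ⟨rfl, List.isChain_singleton _⟩, rfl, rfl⟩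

theorem knowledge_append_singleton (i : Fin n) (w : List (B i)) (b : B i) :
    G.knowledge i (w ++ [b]) = {u | ∃ v ∈ G.knowledge i w, G.step v u ∧ G.obs i u = b} := by
  ext u
  constructor
  · rintro ⟨π, hπ, hobs, hlast⟩
    obtain ⟨τ, rfl⟩ : ∃ τ, π = τ ++ [u] :=
      ⟨π.dropLast, (List.dropLast_append_getLast? u hlast).symm⟩
    have hτ : τ ≠ [] := by
      rintro rfl
      simp [obsSeq] at hobs
    rw [G.obsSeq_append_singleton i hτ, List.append_singleton_inj] at hobs
    obtain ⟨hτH, hstep⟩ := (G.isHistory_append_singleton hτ u).1 hπ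
    have hlast := List.getLast?_eq_some_getLast hτ
    exact ⟨τ.getLast hτ, ⟨τ, hτH, hobs.1, hlast⟩, hstep _ hlast, hobs.2⟩
  · rintro ⟨v, ⟨τ, hτ, hobs, hlast⟩, hstep, rfl⟩
    refine ⟨τ ++ [u], (G.isHistory_append_singleton hτ.ne_nil u).2 ⟨hτ, ?_⟩, ?_, by simp⟩
    · simpa [hlast] using hstep
    · rw [G.obsSeq_append_singleton i hτ.ne_nil, hobs]

theorem obs_eq_of_mem_knowledge {i j : Fin n} {π : List V}
    (hinfo : G.InfoSet i π ⊆ G.InfoSet j π) (hobs : G.obsSeq i π ≠ []) {u v : V}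
    (hu : u ∈ G.knowledge i (G.obsSeq i π)) (hv : π.getLast? = some v) :
    G.obs j u = G.obs j v := by
  obtain ⟨π', hπ', hobs', hu⟩ := hu
  have hj : G.obsSeq j π = G.obsSeq j π' := (hinfo ⟨hπ', hobs'.symm⟩).2
  have := congrArg List.getLast? hj
  rw [G.getLast?_obsSeq j hobs, G.getLast?_obsSeq j (hobs' ▸ hobs), hv, hu] at this
  exact (Option.some.inj this).symm

theorem infoSet_subset_of_obsSeq_factors {i j : Fin n} (f : List (B i) → List (B j))
    (hf : ∀ π, G.IsHistory π → f (G.obsSeq i π) = G.obsSeq j π) (π : List V) (hπ : G.IsHistory π) :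
    G.InfoSet i π ⊆ G.InfoSet j π := by
  rintro π' ⟨hπ', hobs⟩
  exact ⟨hπ', by rw [Indist, ← hf π hπ, ← hf π' hπ', hobs]⟩

variable [Finite V]

open Classical in
noncomputable def knowledgeMoore (i j : Fin n) : Moore (B i) (B j) where
  Q := Set V
  finQ := Fintype.ofFinite _
  q0 := {G.init}
  δ S b := {u | ∃ v ∈ S, G.step v u ∧ G.obs i u = b}
  -- the fallback is only reached on words that no history produces
  out S := if h : S.Nonempty then G.obs j h.some else G.obs j G.init

theorem foldl_knowledgeMoore (i j : Fin n) (w : List (B i)) :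
    w.foldl (G.knowledgeMoore i j).δ (G.knowledgeMoore i j).q0 = G.knowledge i w := by
  induction w using List.reverseRecOn with
  | nil => exact (G.knowledge_nil i).symm
  | append_singleton w b ih =>
    rw [List.foldl_append, ih, G.knowledge_append_singleton]
    rfl

theorem output_knowledgeMoore {i j : Fin n} {π : List V} (hπ : G.IsHistory π)
    (hinfo : G.InfoSet i π ⊆ G.InfoSet j π) (hobs : G.obsSeq i π ≠ []) {v : V}
    (hv : π.getLast? = some v) :
    (G.knowledgeMoore i j).output (G.obsSeq i π) = G.obs j v := by
  have hne : (G.knowledge i (G.obsSeq i π)).Nonempty := ⟨v, π, hπ, rfl, hv⟩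
  rw [Moore.output, G.foldl_knowledgeMoore]
  exact (dif_pos hne : _ = G.obs j hne.some).trans
    (G.obs_eq_of_mem_knowledge hinfo hobs hne.some_mem hv)

theorem outWord_knowledgeMoore {i j : Fin n}
    (hinfo : ∀ π, G.IsHistory π → G.InfoSet i π ⊆ G.InfoSet j π) :
    ∀ π, G.IsHistory π → (G.knowledgeMoore i j).outWord (G.obsSeq i π) = G.obsSeq j π := by
  intro π
  induction π using List.reverseRecOn with
  | nil => exact fun h => absurd rfl h.ne_nil
  | append_singleton π v ih =>
    intro h
    rcases eq_or_ne π [] with rfl | hπ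
    · rfl
    have hobs := G.obsSeq_append_singleton i hπ v
    rw [hobs, Moore.outWord_append_singleton, ← hobs,
      ih ((G.isHistory_append_singleton hπ v).1 h).1,
      G.output_knowledgeMoore h (hinfo _ h) (by simp [hobs]) (List.getLast?_concat ..),
      G.obsSeq_append_singleton j hπ]

end GameGraph

theorem statement0_general {n : ℕ} {V : Type} {A B : Fin n → Type}
    [Fintype V]
    (G : GameGraph n V A B) (ord : Fin n → Fin n → Prop) :
    (∀ i j : Fin n, ord i j → ∀ π, G.IsHistory π → G.InfoSet i π ⊆ G.InfoSet j π) ↔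
      (∀ i j : Fin n, ord i j → ∃ mc : Moore (B i) (B j),
        ∀ π, G.IsHistory π → mc.outWord (G.obsSeq i π) = G.obsSeq j π) := by
  constructor
  · intro hinfo i j hij
    exact ⟨G.knowledgeMoore i j, G.outWord_knowledgeMoore (hinfo i j hij)⟩
  · intro hmoore i j hij
    obtain ⟨mc, hmc⟩ := hmoore i j hij
    exact G.infoSet_subset_of_obsSeq_factors mc.outWord hmc

/-- A finite game graph `G` yields static hierarchical information with
respect to a total order `ord` on the players iff for every pair of players with
`ord i j` there is a Moore machine with input alphabet `B i` and output alphabet `B j`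
which, on input `β^i(π)`, outputs `β^j(π)`, for every history `π` of `G`. -/
theorem statement0 {n : ℕ} {V : Type} {A B : Fin n → Type}
    [Fintype V] [∀ i, Fintype (A i)] [∀ i, Fintype (B i)]
    (G : GameGraph n V A B) (ord : Fin n → Fin n → Prop)
    (hord : IsLinearOrder (Fin n) ord) :
    (∀ i j : Fin n, ord i j → ∀ π, G.IsHistory π → G.InfoSet i π ⊆ G.InfoSet j π) ↔
      (∀ i j : Fin n, ord i j → ∃ mc : Moore (B i) (B j),
        ∀ π, G.IsHistory π → mc.outWord (G.obsSeq i π) = G.obsSeq j π) :=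
  statement0_general G ord
end

section
/- It is decidable, given a finite game graph G, whether G yields dynamic hierarchical information, i.e., whether every history of G yields hierarchical information. -/
/-! Finitely-coded games: a concrete, `Primcodable` representation of finite game
graphs, used to state decidability results.  A coded game consists of: the number
of positions (positions are `0, …, numPos`, with initial position `0`), a finite
list of moves `(source, action profile, target)`, and an observation table whose
`i`-th row gives the observations of player `i` at each position (its length is
the number of players). -/

namespace CG

/-- A coded finite game graph: `(numPos, moves, obsTable)`. -/
abbrev Game : Type := ℕ × List (ℕ × List ℕ × ℕ) × List (List ℕ)

def numPos (c : Game) : ℕ := c.1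

def moves (c : Game) : List (ℕ × List ℕ × ℕ) := c.2.1

def obsTable (c : Game) : List (List ℕ) := c.2.2

/-- The number of players. -/
def numPlayers (c : Game) : ℕ := (obsTable c).length

/-- The observation of player `i` at position `v`. -/
def obsOf (c : Game) (i v : ℕ) : ℕ := ((obsTable c).getD i []).getD v 0

/-- The move relation, labelled by action profiles (coded as lists). -/
def Move (c : Game) (u : ℕ) (a : List ℕ) (w : ℕ) : Prop := (u, a, w) ∈ moves c

/-- Two positions are linked by a move for some action profile. -/
def Step (c : Game) (u w : ℕ) : Prop := ∃ a, Move c u a w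

/-- A history: a nonempty sequence of valid positions starting at the initial
position `0`, each consecutive pair lying on a move. -/
def IsHistory (c : Game) (π : List ℕ) : Prop :=
  π.head? = some 0 ∧ (∀ v ∈ π, v ≤ numPos c) ∧ π.Chain' (Step c)

/-- The observation sequence of player `i` along a history (the observation at
the initial position is discarded). -/
def obsSeq (c : Game) (i : ℕ) (π : List ℕ) : List ℕ := (π.drop 1).map (obsOf c i)

/-- Indistinguishability for player `i`. -/
def Indist (c : Game) (i : ℕ) (π π' : List ℕ) : Prop := obsSeq c i π = obsSeq c i π'

/-- The information set of player `i` at history `π`. -/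
def InfoSet (c : Game) (i : ℕ) (π : List ℕ) : Set (List ℕ) :=
  { π' | IsHistory c π' ∧ Indist c i π π' }

/-- The history `π` yields hierarchical information: the information sets of the
players are totally ordered by inclusion. -/
def HistHI (c : Game) (π : List ℕ) : Prop :=
  ∀ i < numPlayers c, ∀ j < numPlayers c,
    InfoSet c i π ⊆ InfoSet c j π ∨ InfoSet c j π ⊆ InfoSet c i π

/-- Static hierarchical information: there is a total order on the players such
that smaller players always have smaller information sets. -/
def StaticHI (c : Game) : Prop :=
  ∃ ord : ℕ → ℕ → Prop,
    (∀ i < numPlayers c, ord i i) ∧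
    (∀ i < numPlayers c, ∀ j < numPlayers c, ord i j ∨ ord j i) ∧
    (∀ i < numPlayers c, ∀ j < numPlayers c, ∀ k < numPlayers c,
      ord i j → ord j k → ord i k) ∧
    (∀ i < numPlayers c, ∀ j < numPlayers c, ord i j → ord j i → i = j) ∧
    (∀ i < numPlayers c, ∀ j < numPlayers c, ord i j →
      ∀ π, IsHistory c π → InfoSet c i π ⊆ InfoSet c j π)

/-- Dynamic hierarchical information: every history yields hierarchical information. -/
def DynamicHI (c : Game) : Prop := ∀ π, IsHistory c π → HistHI c π

/-- The prefix `v₀ … v_t` of a play, as a list. -/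
def playPrefix (f : ℕ → ℕ) (t : ℕ) : List ℕ := (List.range (t + 1)).map f

/-- A play: an infinite sequence all of whose prefixes are histories. -/
def IsPlay (c : Game) (f : ℕ → ℕ) : Prop := ∀ t, IsHistory c (playPrefix f t)

/-- Recurring hierarchical information: along every play, infinitely many prefix
histories yield hierarchical information. -/
def RecurringHI (c : Game) : Prop :=
  ∀ f, IsPlay c f → ∀ T, ∃ t, T ≤ t ∧ HistHI c (playPrefix f t)

/-- Information-consistency of a strategy of player `i`. -/
def Consistent (c : Game) (i : ℕ) (s : List ℕ → ℕ) : Prop :=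
  ∀ π π', IsHistory c π → IsHistory c π' → Indist c i π π' → s π = s π'

/-- A play follows a strategy profile `s`: at each round some move is taken whose
action profile agrees with the actions prescribed by `s` for every player. -/
def Follows (c : Game) (s : ℕ → List ℕ → ℕ) (f : ℕ → ℕ) : Prop :=
  IsPlay c f ∧ ∀ t, ∃ a, Move c (f t) a (f (t + 1)) ∧
    ∀ i < numPlayers c, a.getD i 0 = s i (playPrefix f t)

/-- A history follows a strategy profile `s`. -/
def HFollows (c : Game) (s : ℕ → List ℕ → ℕ) (π : List ℕ) : Prop :=
  IsHistory c π ∧ ∀ k, k + 1 < π.length →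
    ∃ a, Move c (π.getD k 0) a (π.getD (k + 1) 0) ∧
      ∀ i < numPlayers c, a.getD i 0 = s i (π.take (k + 1))

/-- A coded deterministic parity automaton over alphabet `ℕ`:
`(transition table ((state, letter), target), priorities)`; initial state `0`;
missing transitions default to state `0`. -/
abbrev DPA : Type := List ((ℕ × ℕ) × ℕ) × List ℕ

/-- The transition function of a coded parity automaton. -/
def dpaStep (d : DPA) (q v : ℕ) : ℕ :=
  ((d.1.find? fun e => e.1.1 == q && e.1.2 == v).map Prod.snd).getD 0

/-- The run of a coded parity automaton on an infinite word. -/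
def dpaRun (d : DPA) (f : ℕ → ℕ) : ℕ → ℕ
  | 0 => 0
  | t + 1 => dpaStep d (dpaRun d f t) (f t)

/-- The priority of a state. -/
def prio (d : DPA) (q : ℕ) : ℕ := d.2.getD q 0

/-- Parity acceptance: the least priority occurring infinitely often in the run is even. -/
def Accepts (d : DPA) (f : ℕ → ℕ) : Prop :=
  Even (sInf { p | ∃ᶠ t in Filter.atTop, prio d (dpaRun d f t) = p })

/-- A distributed winning strategy for the ω-regular winning condition given by
the parity automaton `d` over the positions. -/
def WinningProfile (c : Game) (d : DPA) (s : ℕ → List ℕ → ℕ) : Prop :=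
  (∀ i < numPlayers c, Consistent c i (s i)) ∧ ∀ f, Follows c s f → Accepts d f

/-- The game admits a distributed winning strategy. -/
def HasDWS (c : Game) (d : DPA) : Prop := ∃ s, WinningProfile c d s

/-- A Moore machine with finite state set `Q`, input alphabet `σ`, output alphabet `γ`. -/
structure Moore (σ γ : Type) where
  Q : Type
  finQ : Fintype Q
  q0 : Q
  δ : Q → σ → Q
  out : Q → γ

/-- The output letter of a Moore machine after reading a word. -/
def Moore.output {σ γ : Type} (mc : Moore σ γ) (w : List σ) : γ :=
  mc.out (w.foldl mc.δ mc.q0)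

/-- A finite-state strategy for player `i`: implemented by a Moore machine reading
the observation sequence of the history. -/
def FinStateStrategy (c : Game) (i : ℕ) (s : List ℕ → ℕ) : Prop :=
  ∃ mc : Moore ℕ ℕ, ∀ π, IsHistory c π → s π = mc.output (obsSeq c i π)

/-- The game admits a finite-state distributed winning strategy. -/
def HasFinDWS (c : Game) (d : DPA) : Prop :=
  ∃ s, WinningProfile c d s ∧ ∀ i < numPlayers c, FinStateStrategy c i (s i)

/-- The colour of position `v` under a coded colouring. -/
def colOf (γ : List ℕ) (v : ℕ) : ℕ := γ.getD v 0

/-- The colouring `γ` is observable: each player's observation distinguishes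
positions of different colours. -/
def Observable (c : Game) (γ : List ℕ) : Prop :=
  ∀ i < numPlayers c, ∀ v ≤ numPos c, ∀ w ≤ numPos c,
    colOf γ v ≠ colOf γ w → obsOf c i v ≠ obsOf c i w

/-- A distributed winning strategy for the winning condition over colours given
by the colouring `γ` and the parity automaton `d` over colours. -/
def WinningProfileCol (c : Game) (γ : List ℕ) (d : DPA) (s : ℕ → List ℕ → ℕ) : Prop :=
  (∀ i < numPlayers c, Consistent c i (s i)) ∧
    ∀ f, Follows c s f → Accepts d fun t => colOf γ (f t)

/-- The game admits a distributed winning strategy (colour version). -/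
def HasDWSCol (c : Game) (γ : List ℕ) (d : DPA) : Prop := ∃ s, WinningProfileCol c γ d s

/-- The game admits a finite-state distributed winning strategy (colour version). -/
def HasFinDWSCol (c : Game) (γ : List ℕ) (d : DPA) : Prop :=
  ∃ s, WinningProfileCol c γ d s ∧ ∀ i < numPlayers c, FinStateStrategy c i (s i)

/-- The strategy profile `s` maintains hierarchical information: every history
that follows `s` yields hierarchical information. -/
def Maintains (c : Game) (s : ℕ → List ℕ → ℕ) : Prop :=
  ∀ π, HFollows c s π → HistHI c π

end CG


/-!
A history `π` violates hierarchical information for players `i`, `j` exactly when there are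
histories `π₁ ∼ᵢ π` with `π₁ ≁ⱼ π` and `π₂ ∼ⱼ π` with `π₂ ≁ᵢ π`. Growing such a triple one position
at a time is a walk in a finite product graph whose states are the three current positions together
with two flags recording whether `j` has already told `π₁` from `π` and whether `i` has already told
`π₂` from `π`. So dynamic hierarchical information fails iff some state with both flags set is
reachable from the initial state; reachability in a finite graph is decided by saturating the set
of reachable states for as many rounds as there are states, which is primitive recursive.
-/

open Relation

section Reachability

variable {α : Type*} {r : α → α → Prop} {a b : α}

theorem Relation.ReflTransGen.exists_nodup_isChain (h : ReflTransGen r a b) :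
    ∃ l : List α, (a :: l).IsChain r ∧ (a :: l).getLast? = some b ∧ (a :: l).Nodup := by
  induction h using Relation.ReflTransGen.head_induction_on with
  | refl => exact ⟨[], .singleton _, rfl, List.nodup_singleton _⟩
  | @head a c hac _ ih =>
    obtain ⟨l, hchain, hlast, hnodup⟩ := ih
    by_cases ha : a ∈ c :: l
    · -- skip the loop from `a` back to `a`
      obtain ⟨s, t, hst⟩ := List.append_of_mem ha
      rw [hst] at hchain hlast hnodup
      exact ⟨t, hchain.right_of_append, by simpa [List.getLast?_append] using hlast,
        hnodup.sublist (List.sublist_append_right _ _)⟩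
    · exact ⟨c :: l, hchain.cons (by simpa using hac), hlast, List.nodup_cons.2 ⟨ha, hnodup⟩⟩

variable {S : List α}

theorem List.IsChain.tail_subset (hS : ∀ x y, r x y → y ∈ S) :
    ∀ {a : α} {l : List α}, (a :: l).IsChain r → l ⊆ S
  | _, [], _ => List.nil_subset _
  | _, _ :: _, .cons_cons hab hchain => List.cons_subset.2 ⟨hS _ _ hab, hchain.tail_subset hS⟩

open Classical in
noncomputable def reachWithin (S : List α) (r : α → α → Prop) (a : α) : ℕ → List α
  | 0 => [a]
  | k + 1 => reachWithin S r a k ++ S.filter fun y => ∃ x ∈ reachWithin S r a k, r x y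

theorem mem_reachWithin_succ {k : ℕ} {y : α} :
    y ∈ reachWithin S r a (k + 1) ↔
      y ∈ reachWithin S r a k ∨ y ∈ S ∧ ∃ x ∈ reachWithin S r a k, r x y := by
  simp [reachWithin]

theorem reachWithin_mono {k m : ℕ} (hkm : k ≤ m) :
    reachWithin S r a k ⊆ reachWithin S r a m := by
  induction m, hkm using Nat.le_induction with
  | base => exact List.Subset.refl _
  | succ m _ ih => exact fun y hy => mem_reachWithin_succ.2 (.inl (ih hy))

theorem Relation.ReflTransGen.of_mem_reachWithin {k : ℕ} (h : b ∈ reachWithin S r a k) :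
    ReflTransGen r a b := by
  induction k generalizing b with
  | zero => simp_all [reachWithin, ReflTransGen.refl]
  | succ k ih =>
    rcases mem_reachWithin_succ.1 h with h | ⟨-, x, hx, hxb⟩
    exacts [ih h, (ih hx).tail hxb]

theorem mem_reachWithin_of_isChain (hS : ∀ x y, r x y → y ∈ S) {l : List α}
    (h : (a :: l).IsChain r) (hb : (a :: l).getLast? = some b) :
    b ∈ reachWithin S r a l.length := by
  induction l using List.reverseRecOn generalizing b with
  | nil => simp_all [reachWithin]
  | append_singleton l y ih =>
    rw [← List.cons_append, List.isChain_append] at h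
    obtain ⟨hpre, -, hlast⟩ := h
    obtain ⟨x, hx⟩ : ∃ x, (a :: l).getLast? = some x :=
      ⟨_, List.getLast?_eq_some_getLast (List.cons_ne_nil a l)⟩
    obtain rfl : y = b := by
      rw [← List.cons_append, List.getLast?_concat] at hb
      exact Option.some_injective _ hb
    have hxy : r x y := hlast x hx y rfl
    simpa using mem_reachWithin_succ.2 (.inr ⟨hS x y hxy, x, ih hpre hx, hxy⟩)

theorem reflTransGen_iff_mem_reachWithin (hS : ∀ x y, r x y → y ∈ S) :
    ReflTransGen r a b ↔ b ∈ reachWithin S r a S.length := by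
  refine ⟨fun h => ?_, ReflTransGen.of_mem_reachWithin⟩
  obtain ⟨l, hchain, hlast, hnodup⟩ := h.exists_nodup_isChain
  have hlen : l.length ≤ S.length :=
    (List.subperm_of_subset (List.nodup_cons.1 hnodup).2 (hchain.tail_subset hS)).length_le
  exact reachWithin_mono hlen (mem_reachWithin_of_isChain hS hchain hlast)

end Reachability

section Primrec

open Primrec

variable {α β : Type*} [Primcodable α] [Primcodable β]

theorem Primrec.reachWithin {S : β → List α} {r : β → α → α → Prop} {a : β → α} {k : β → ℕ}
    (hS : Primrec S) (hr : PrimrecPred fun q : β × α × α => r q.1 q.2.1 q.2.2) (ha : Primrec a)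
    (hk : Primrec k) : Primrec fun x => reachWithin (S x) (r x) (a x) (k x) := by
  classical
  have hsucc : PrimrecRel fun (y : α) (q : β × List α) => ∃ z ∈ q.2, r q.1 z y :=
    (PrimrecRel.exists_mem_list (R := fun z (p : β × α) => r p.1 z p.2)
      (hr.comp (pair (fst.comp snd) (pair fst (snd.comp snd))))).comp
        (snd.comp snd) (pair (fst.comp snd) fst)
  have hstep : Primrec₂ fun (x : β) (p : ℕ × List α) =>
      p.2 ++ (S x).filter fun y => ∃ z ∈ p.2, r x z y :=
    list_append.comp (snd.comp snd) (hsucc.listFilter.comp (hS.comp fst) (pair fst (snd.comp snd)))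
  refine (nat_rec' hk (list_cons.comp ha (const [])) hstep).of_eq fun x => ?_
  induction k x with
  | zero => rfl
  | succ n ih => simp [_root_.reachWithin, ih]

theorem PrimrecPred.forall_lt' {n : α → ℕ} {p : α → ℕ → Prop} (hn : Primrec n)
    (hp : PrimrecPred fun x : α × ℕ => p x.1 x.2) : PrimrecPred fun a => ∀ k < n a, p a k :=
  ((PrimrecRel.forall_mem_list (R := fun k a => p a k) (hp.comp (pair snd fst))).comp
    (list_range.comp hn) Primrec.id).of_eq fun _ => by simp

theorem Primrec.list_product : Primrec₂ fun (l₁ : List α) (l₂ : List β) => l₁ ×ˢ l₂ :=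
  list_flatMap fst (list_map (snd.comp fst) (pair (snd.comp fst) snd).to₂).to₂

end Primrec

namespace CG

variable {c : Game} {i j v v' : ℕ} {π π' : List ℕ}

theorem IsHistory.ne_nil (h : IsHistory c π) : π ≠ [] := by
  rintro rfl
  simp [IsHistory] at h

theorem isHistory_iff :
    IsHistory c π ↔ π.head? = some 0 ∧ (∀ v ∈ π, v ≤ numPos c) ∧ π.IsChain (Step c) :=
  Iff.rfl

theorem isHistory_singleton : IsHistory c [v] ↔ v = 0 := by
  simp only [isHistory_iff, List.head?_cons, Option.some_inj, List.mem_singleton, forall_eq,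
    List.isChain_singleton, and_true, and_iff_left_iff_imp]
  rintro rfl
  exact Nat.zero_le _

theorem isHistory_append_singleton (hπ : π ≠ []) :
    IsHistory c (π ++ [v]) ↔ IsHistory c π ∧ (∀ u ∈ π.getLast?, Step c u v) ∧ v ≤ numPos c := by
  obtain ⟨w, l, rfl⟩ := List.exists_cons_of_ne_nil hπ
  simp only [isHistory_iff, List.isChain_append, List.head?_append, List.head?_cons,
    Option.or_some, Option.getD_some, List.mem_append, List.mem_singleton, or_imp, forall_and,
    forall_eq, List.isChain_singleton, true_and, Option.mem_def, Option.some_inj, forall_eq']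
  tauto

theorem obsSeq_append_singleton (hπ : π ≠ []) :
    obsSeq c i (π ++ [v]) = obsSeq c i π ++ [obsOf c i v] := by
  obtain ⟨w, l, rfl⟩ := List.exists_cons_of_ne_nil hπ
  simp [obsSeq]

theorem indist_append_singleton (hπ : π ≠ []) (hπ' : π' ≠ []) :
    Indist c i (π ++ [v]) (π' ++ [v']) ↔ Indist c i π π' ∧ obsOf c i v = obsOf c i v' := by
  simp [Indist, obsSeq_append_singleton, hπ, hπ']

theorem Indist.length_eq (h : Indist c i π π') (hπ : π ≠ []) (hπ' : π' ≠ []) :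
    π.length = π'.length := by
  have := congrArg List.length h
  simp only [obsSeq, List.length_map, List.length_drop] at this
  have := List.length_pos_iff.2 hπ
  have := List.length_pos_iff.2 hπ'
  omega

/-- `((v, v₁, v₂), b₁, b₂)`: the last positions of three histories `π, π₁, π₂`, with `b₁` recording
whether player `j` tells `π₁` from `π` and `b₂` whether player `i` tells `π₂` from `π`. -/
abbrev TripleState : Type := (ℕ × ℕ × ℕ) × Bool × Bool

def TripleStep (c : Game) (i j : ℕ) : TripleState → TripleState → Prop
  | ((u, u₁, u₂), b₁, b₂), ((v, v₁, v₂), b₁', b₂') =>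
    (Step c u v ∧ Step c u₁ v₁ ∧ Step c u₂ v₂) ∧ (v ≤ numPos c ∧ v₁ ≤ numPos c ∧ v₂ ≤ numPos c) ∧
      obsOf c i v = obsOf c i v₁ ∧ obsOf c j v = obsOf c j v₂ ∧
      (b₁' ↔ b₁ ∨ obsOf c j v ≠ obsOf c j v₁) ∧ (b₂' ↔ b₂ ∨ obsOf c i v ≠ obsOf c i v₂)

def Realizes (c : Game) (i j : ℕ) (π π₁ π₂ : List ℕ) : TripleState → Prop
  | ((v, v₁, v₂), b₁, b₂) =>
    (IsHistory c π ∧ IsHistory c π₁ ∧ IsHistory c π₂) ∧ Indist c i π π₁ ∧ Indist c j π π₂ ∧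
      (π.getLast? = some v ∧ π₁.getLast? = some v₁ ∧ π₂.getLast? = some v₂) ∧
      (b₁ ↔ ¬Indist c j π π₁) ∧ (b₂ ↔ ¬Indist c i π π₂)

variable {π₁ π₂ : List ℕ} {v₁ v₂ : ℕ} {s t : TripleState}

theorem realizes_singleton_iff :
    Realizes c i j [v] [v₁] [v₂] s ↔ v = 0 ∧ v₁ = 0 ∧ v₂ = 0 ∧ s = ((0, 0, 0), false, false) := by
  obtain ⟨⟨w, w₁, w₂⟩, b₁, b₂⟩ := s
  simp only [Realizes, isHistory_singleton, Indist, obsSeq, List.drop_succ_cons, List.drop_nil,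
    List.map_nil, List.getLast?_singleton, Option.some.injEq, not_true_eq_false, iff_false,
    Bool.not_eq_true, true_and, Prod.mk.injEq]
  grind

theorem realizes_append_singleton_iff (h : Realizes c i j π π₁ π₂ s) :
    Realizes c i j (π ++ [v]) (π₁ ++ [v₁]) (π₂ ++ [v₂]) t ↔
      t.1 = (v, v₁, v₂) ∧ TripleStep c i j s t := by
  obtain ⟨⟨u, u₁, u₂⟩, b₁, b₂⟩ := s
  obtain ⟨⟨w, w₁, w₂⟩, d₁, d₂⟩ := t
  obtain ⟨⟨hπ, hπ₁, hπ₂⟩, h₁, h₂, ⟨hu, hu₁, hu₂⟩, hb₁, hb₂⟩ := h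
  simp only [Realizes, TripleStep, isHistory_append_singleton, indist_append_singleton,
    hπ.ne_nil, hπ₁.ne_nil, hπ₂.ne_nil, ne_eq, not_false_eq_true, hπ, hπ₁, hπ₂, hu, hu₁, hu₂, h₁, h₂,
    hb₁, hb₂, Option.mem_def, Option.some.injEq, forall_eq', true_and, List.getLast?_append,
    List.getLast?_singleton, Option.or_some, Option.getD_some, not_and, Prod.mk.injEq]
  grind

theorem exists_realizes (hπ : IsHistory c π) (hπ₁ : IsHistory c π₁) (hπ₂ : IsHistory c π₂)
    (h₁ : Indist c i π π₁) (h₂ : Indist c j π π₂) : ∃ s, Realizes c i j π π₁ π₂ s := by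
  classical
  exact ⟨((π.getLast hπ.ne_nil, π₁.getLast hπ₁.ne_nil, π₂.getLast hπ₂.ne_nil),
      decide ¬Indist c j π π₁, decide ¬Indist c i π π₂),
    ⟨hπ, hπ₁, hπ₂⟩, h₁, h₂, ⟨List.getLast?_eq_some_getLast _, List.getLast?_eq_some_getLast _,
      List.getLast?_eq_some_getLast _⟩, decide_eq_true_iff, decide_eq_true_iff⟩

theorem Realizes.reflTransGen (h : Realizes c i j π π₁ π₂ s) :
    ReflTransGen (TripleStep c i j) ((0, 0, 0), false, false) s := by
  induction π using List.reverseRecOn generalizing π₁ π₂ s with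
  | nil =>
    obtain ⟨⟨v, v₁, v₂⟩, b₁, b₂⟩ := s
    exact absurd rfl h.1.1.ne_nil
  | append_singleton π v ih =>
    obtain ⟨⟨w, w₁, w₂⟩, b₁, b₂⟩ := s
    obtain ⟨⟨hπ, hπ₁, hπ₂⟩, h₁, h₂, -⟩ := id h
    obtain ⟨π₁, v₁, rfl⟩ := (List.eq_nil_or_concat' π₁).resolve_left hπ₁.ne_nil
    obtain ⟨π₂, v₂, rfl⟩ := (List.eq_nil_or_concat' π₂).resolve_left hπ₂.ne_nil
    have hlen₁ := h₁.length_eq hπ.ne_nil hπ₁.ne_nil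
    have hlen₂ := h₂.length_eq hπ.ne_nil hπ₂.ne_nil
    simp only [List.length_append, List.length_singleton, Nat.add_right_cancel_iff] at hlen₁ hlen₂
    rcases eq_or_ne π [] with rfl | hne
    · rw [List.length_eq_zero_iff.1 hlen₁.symm, List.length_eq_zero_iff.1 hlen₂.symm] at h
      obtain ⟨-, -, -, hs⟩ := realizes_singleton_iff.1 h
      rw [hs]
    · have hne₁ : π₁ ≠ [] := List.ne_nil_of_length_pos (hlen₁ ▸ List.length_pos_iff.2 hne)
      have hne₂ : π₂ ≠ [] := List.ne_nil_of_length_pos (hlen₂ ▸ List.length_pos_iff.2 hne)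
      obtain ⟨s, hs⟩ := exists_realizes ((isHistory_append_singleton hne).1 hπ).1
        ((isHistory_append_singleton hne₁).1 hπ₁).1 ((isHistory_append_singleton hne₂).1 hπ₂).1
        ((indist_append_singleton hne hne₁).1 h₁).1 ((indist_append_singleton hne hne₂).1 h₂).1
      exact (ih hs).tail ((realizes_append_singleton_iff hs).1 h).2

theorem reflTransGen_tripleStep_iff :
    ReflTransGen (TripleStep c i j) ((0, 0, 0), false, false) s ↔
      ∃ π π₁ π₂, Realizes c i j π π₁ π₂ s := by
  refine ⟨fun h => ?_, fun ⟨π, π₁, π₂, h⟩ => h.reflTransGen⟩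
  induction h with
  | refl => exact ⟨[0], [0], [0], realizes_singleton_iff.2 ⟨rfl, rfl, rfl, rfl⟩⟩
  | tail _ hst ih =>
    obtain ⟨π, π₁, π₂, hs⟩ := ih
    exact ⟨_, _, _, (realizes_append_singleton_iff hs).2 ⟨rfl, hst⟩⟩

theorem dynamicHI_iff_forall_reflTransGen :
    DynamicHI c ↔ ∀ i < numPlayers c, ∀ j < numPlayers c, ∀ s,
      ReflTransGen (TripleStep c i j) ((0, 0, 0), false, false) s → s.2 ≠ (true, true) := by
  constructor
  · rintro hc i hi j hj ⟨v, b₁, b₂⟩ hs hb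
    obtain ⟨rfl, rfl⟩ := Prod.mk.inj hb
    obtain ⟨π, π₁, π₂, ⟨hπ, hπ₁, hπ₂⟩, h₁, h₂, -, hb₁, hb₂⟩ := reflTransGen_tripleStep_iff.1 hs
    rcases hc π hπ i hi j hj with hsub | hsub
    exacts [hb₁.1 rfl (hsub ⟨hπ₁, h₁⟩).2, hb₂.1 rfl (hsub ⟨hπ₂, h₂⟩).2]
  · intro h π hπ i hi j hj
    by_contra hcon
    rw [not_or, Set.not_subset, Set.not_subset] at hcon
    obtain ⟨⟨π₁, ⟨hπ₁, h₁⟩, hn₁⟩, ⟨π₂, ⟨hπ₂, h₂⟩, hn₂⟩⟩ := hcon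
    obtain ⟨⟨v, b₁, b₂⟩, hs⟩ := exists_realizes hπ hπ₁ hπ₂ h₁ h₂
    have hb₁ : b₁ = true := hs.2.2.2.2.1.2 fun h => hn₁ ⟨hπ₁, h⟩
    have hb₂ : b₂ = true := hs.2.2.2.2.2.2 fun h => hn₂ ⟨hπ₂, h⟩
    exact h i hi j hj _ hs.reflTransGen (by rw [hb₁, hb₂])

def tripleStates (c : Game) : List TripleState :=
  (List.range (numPos c + 1) ×ˢ List.range (numPos c + 1) ×ˢ List.range (numPos c + 1)) ×ˢ
    ([false, true] ×ˢ [false, true])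

theorem TripleStep.mem_tripleStates (h : TripleStep c i j s t) : t ∈ tripleStates c := by
  obtain ⟨⟨u, u₁, u₂⟩, b₁, b₂⟩ := s
  obtain ⟨⟨v, v₁, v₂⟩, d₁, d₂⟩ := t
  obtain ⟨-, ⟨hv, hv₁, hv₂⟩, -⟩ := h
  simp only [tripleStates, List.mem_product, List.mem_range, Nat.lt_succ_iff]
  exact ⟨⟨hv, hv₁, hv₂⟩, by cases d₁ <;> simp, by cases d₂ <;> simp⟩

theorem dynamicHI_iff_reachWithin :
    DynamicHI c ↔ ∀ i < numPlayers c, ∀ j < numPlayers c,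
      ∀ s ∈ reachWithin (tripleStates c) (TripleStep c i j) ((0, 0, 0), false, false)
        (tripleStates c).length, s.2 ≠ (true, true) := by
  simp only [dynamicHI_iff_forall_reflTransGen,
    reflTransGen_iff_mem_reachWithin fun _ _ h => TripleStep.mem_tripleStates h]

section Primrec

open Primrec

variable {α : Type*} [Primcodable α]

theorem primrec_obsOf {f : α → Game} {i v : α → ℕ} (hf : Primrec f) (hi : Primrec i)
    (hv : Primrec v) : Primrec fun a => obsOf (f a) (i a) (v a) :=
  (list_getD 0).comp ((list_getD []).comp (snd.comp (snd.comp hf)) hi) hv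

theorem step_iff_exists_mem_moves {u v : ℕ} : Step c u v ↔ ∃ m ∈ moves c, m.1 = u ∧ m.2.2 = v :=
  ⟨fun ⟨a, h⟩ => ⟨(u, a, v), h, rfl, rfl⟩, fun ⟨(_, a, _), hm, hu, hv⟩ => ⟨a, hu ▸ hv ▸ hm⟩⟩

theorem primrecPred_step {f : α → Game} {u v : α → ℕ} (hf : Primrec f) (hu : Primrec u)
    (hv : Primrec v) : PrimrecPred fun a => Step (f a) (u a) (v a) := by
  have hends : PrimrecRel fun (m : ℕ × List ℕ × ℕ) (p : ℕ × ℕ) => m.1 = p.1 ∧ m.2.2 = p.2 :=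
    (Primrec.eq.comp (fst.comp fst) (fst.comp snd)).and
      (Primrec.eq.comp (snd.comp (snd.comp fst)) (snd.comp snd))
  exact (hends.exists_mem_list.comp (fst.comp (snd.comp hf)) (hu.pair hv)).of_eq
    fun _ => step_iff_exists_mem_moves.symm

theorem primrecPred_tripleStep {f : α → Game} {i j : α → ℕ} {s t : α → TripleState}
    (hf : Primrec f) (hi : Primrec i) (hj : Primrec j) (hs : Primrec s) (ht : Primrec t) :
    PrimrecPred fun a => TripleStep (f a) (i a) (j a) (s a) (t a) := by
  have hstep {p : TripleState → ℕ} (hp : Primrec p) :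
      PrimrecPred fun a => Step (f a) (p (s a)) (p (t a)) :=
    primrecPred_step hf (hp.comp hs) (hp.comp ht)
  have hle {p : TripleState → ℕ} (hp : Primrec p) :
      PrimrecPred fun a => p (t a) ≤ numPos (f a) :=
    nat_le.comp (hp.comp ht) (fst.comp hf)
  have hobs {k : α → ℕ} {p p' : TripleState → ℕ} (hk : Primrec k) (hp : Primrec p)
      (hp' : Primrec p') :
      PrimrecPred fun a => obsOf (f a) (k a) (p (t a)) = obsOf (f a) (k a) (p' (t a)) :=
    Primrec.eq.comp (primrec_obsOf hf hk (hp.comp ht)) (primrec_obsOf hf hk (hp'.comp ht))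
  have hflag {k : α → ℕ} {p p' : TripleState → ℕ} {b : TripleState → Bool} (hk : Primrec k)
      (hp : Primrec p) (hp' : Primrec p') (hb : Primrec b) :
      PrimrecPred fun a => (b (t a) ↔
        b (s a) ∨ obsOf (f a) (k a) (p (t a)) ≠ obsOf (f a) (k a) (p' (t a))) :=
    (Primrec.eq.comp (hb.comp ht) (Primrec.or.comp (hb.comp hs) (Primrec.not.comp
      (Primrec.beq.comp (primrec_obsOf hf hk (hp.comp ht)) (primrec_obsOf hf hk (hp'.comp ht))))))
      |>.of_eq fun _ => Bool.eq_iff_iff.trans (by simp)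
  have h₀ : Primrec fun s : TripleState => s.1.1 := fst.comp fst
  have h₁ : Primrec fun s : TripleState => s.1.2.1 := fst.comp (snd.comp fst)
  have h₂ : Primrec fun s : TripleState => s.1.2.2 := snd.comp (snd.comp fst)
  exact (((hstep h₀).and ((hstep h₁).and (hstep h₂))).and
    (((hle h₀).and ((hle h₁).and (hle h₂))).and ((hobs hi h₀ h₁).and ((hobs hj h₀ h₂).and
    ((hflag hj h₀ h₁ (fst.comp snd)).and (hflag hi h₀ h₂ (snd.comp snd))))))).of_eq
    fun _ => Iff.rfl

theorem primrec_tripleStates : Primrec tripleStates := by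
  have hpos : Primrec fun c : Game => List.range (numPos c + 1) := list_range.comp (succ.comp fst)
  exact list_product.comp (list_product.comp hpos (list_product.comp hpos hpos)) (const _)

theorem primrecPred_forall_reachWithin :
    PrimrecPred fun c : Game => ∀ i < numPlayers c, ∀ j < numPlayers c,
      ∀ s ∈ reachWithin (tripleStates c) (TripleStep c i j) ((0, 0, 0), false, false)
        (tripleStates c).length, s.2 ≠ (true, true) := by
  have hstates : Primrec fun x : (Game × ℕ) × ℕ => tripleStates x.1.1 :=
    primrec_tripleStates.comp (fst.comp fst)
  have hreach : Primrec fun x : (Game × ℕ) × ℕ => reachWithin (tripleStates x.1.1)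
      (TripleStep x.1.1 x.1.2 x.2) ((0, 0, 0), false, false) (tripleStates x.1.1).length :=
    Primrec.reachWithin hstates
      (primrecPred_tripleStep (fst.comp (fst.comp fst)) (snd.comp (fst.comp fst)) (snd.comp fst)
        (fst.comp snd) (snd.comp snd))
      (const _) (list_length.comp hstates)
  have hsafe := ((Primrec.eq.comp snd (const (true, true))).not.forall_mem_list).comp hreach
  have hplayers : Primrec fun c : Game => numPlayers c := list_length.comp (snd.comp snd)
  exact .forall_lt' hplayers (.forall_lt' (hplayers.comp fst) hsafe)

end Primrec

end CG

/-- It is decidable, given a finite game graph, whether it yields dynamic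
hierarchical information, i.e., whether every history yields hierarchical information. -/
theorem statement6 : ComputablePred (fun c : CG.Game => CG.DynamicHI c) :=
  (CG.primrecPred_forall_reachWithin.of_eq fun _ =>
    CG.dynamicHI_iff_reachWithin.symm).computablePred
end
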